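/- arXiv:2502.06459 — 5 statements merged into one kernel-verified Lean document; each statement's English description precedes it below -/
import Mathlib

section
/- Let (V, ≤) be a finite partially ordered set and U ⊆ V. The minimum number of chains of V whose union contains U equals the maximum cardinality of an antichain contained in U. -/
/-!
A chain of `V` meets `U` in a chain, so it suffices to prove Dilworth's theorem for the finite
set `U`; partitions into `k` chains are encoded as colourings with `k` colours whose colour
classes are chains. We follow Galvin's induction on a finite set `s`. Remove a maximal element
`a`; the rest has an antichain of size `k` and a `k`-colouring. In each colour take the largest
element lying in some antichain of size `k`: these form an antichain `X` of size `k` lying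
colourwise above every antichain of size `k`. If `a` lies above no element of `X`, then
`X ∪ {a}` is an antichain of size `k + 1` and `{a}` is a new colour class. Otherwise `a ≥ z ∈ X`,
and the chain `K` formed by `a` and the elements of the colour of `z` below `z` meets every
antichain of size `k`; so by induction `s \ K` is a union of `k - 1` chains, and `K` is the
`k`-th.
-/

open Finset

variable {α : Type*}

section Preorder

variable [Preorder α]

-- Colours are natural numbers below `k` rather than `Fin k`: there is no map `α → Fin 0`.
def IsChainColoring (s : Set α) (k : ℕ) (f : α → ℕ) : Prop :=
  (∀ x ∈ s, f x < k) ∧ ∀ ⦃x⦄, x ∈ s → ∀ ⦃y⦄, y ∈ s → f x = f y → x ≤ y ∨ y ≤ x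

namespace IsChainColoring

variable {s : Set α} {k : ℕ} {f : α → ℕ} {A : Finset α}

theorem mapsTo_range (hf : IsChainColoring s k f) (hAs : ↑A ⊆ s) :
    Set.MapsTo f A (range k) := fun x hx ↦ mem_range.2 (hf.1 x (hAs hx))

theorem injOn_of_isAntichain (hf : IsChainColoring s k f) {A : Set α} (hAs : A ⊆ s)
    (hA : IsAntichain (· ≤ ·) A) : A.InjOn f := fun _ hx _ hy hxy ↦
  (hf.2 (hAs hx) (hAs hy) hxy).elim (hA.eq hx hy) fun h ↦ (hA.eq hy hx h).symm

theorem card_le (hf : IsChainColoring s k f) (hAs : ↑A ⊆ s)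
    (hA : IsAntichain (· ≤ ·) (A : Set α)) : #A ≤ k :=
  (card_le_card_of_injOn f (hf.mapsTo_range hAs) (hf.injOn_of_isAntichain hAs hA)).trans_eq
    (card_range k)

theorem exists_mem_color_eq (hf : IsChainColoring s k f) (hAs : ↑A ⊆ s)
    (hA : IsAntichain (· ≤ ·) (A : Set α)) (hcard : #A = k) {i : ℕ} (hi : i < k) :
    ∃ x ∈ A, f x = i :=
  surjOn_of_injOn_of_card_le f (hf.mapsTo_range hAs) (hf.injOn_of_isAntichain hAs hA)
    (by rw [card_range, hcard]) (mem_range.2 hi)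

theorem extend_by_chain {K : Set α} [DecidablePred (· ∈ K)] (hf : IsChainColoring (s \ K) k f)
    (hK : IsChain (· ≤ ·) K) :
    IsChainColoring s (k + 1) fun x ↦ if x ∈ K then k else f x := by
  refine ⟨fun x hx ↦ ?_, fun x hx y hy hxy ↦ ?_⟩
  · dsimp only
    split_ifs with hxK
    exacts [k.lt_succ_self, (hf.1 x ⟨hx, hxK⟩).trans k.lt_succ_self]
  · by_cases hxK : x ∈ K <;> by_cases hyK : y ∈ K <;>
      simp only [hxK, hyK, if_true, if_false] at hxy
    · exact hK.total hxK hyK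
    · exact absurd hxy (hf.1 y ⟨hy, hyK⟩).ne'
    · exact absurd hxy (hf.1 x ⟨hx, hxK⟩).ne
    · exact hf.2 ⟨hx, hxK⟩ ⟨hy, hyK⟩ hxy

theorem isChain_fiber {s : Finset α} (hf : IsChainColoring (s : Set α) k f) (i : ℕ) :
    IsChain (· ≤ ·) (s.filter (f · = i) : Set α) := fun x hx y hy _ ↦ by
  simp only [coe_filter, Set.mem_ofPred_eq] at hx hy
  exact hf.2 hx.1 hy.1 (hx.2.trans hy.2.symm)

end IsChainColoring

theorem IsAntichain.card_le_card_of_subset_biUnion {ι : Type*} [DecidableEq α] {A : Finset α}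
    (hA : IsAntichain (· ≤ ·) (A : Set α)) {t : Finset ι} {C : ι → Finset α}
    (hC : ∀ i ∈ t, IsChain (· ≤ ·) (C i : Set α)) (hAC : A ⊆ t.biUnion C) : #A ≤ #t :=
  calc #A = #(t.biUnion fun i ↦ A ∩ C i) := by rw [← inter_biUnion, inter_eq_left.2 hAC]
    _ ≤ ∑ i ∈ t, #(A ∩ C i) := card_biUnion_le
    _ ≤ ∑ _i ∈ t, 1 := sum_le_sum fun i hi ↦ card_le_one.2 fun _ hx _ hy ↦
        inter_subsingleton_of_isAntichain_of_isChain hA (hC i hi) (mem_inter.1 hx)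
          (mem_inter.1 hy)
    _ = #t := by rw [sum_const, smul_eq_mul, mul_one]

end Preorder

section PartialOrder

variable [PartialOrder α]

theorem IsChainColoring.exists_dominating_antichain {s : Finset α} {k : ℕ} {f : α → ℕ}
    (hf : IsChainColoring (s : Set α) k f)
    (h₀ : ∃ A ⊆ s, IsAntichain (· ≤ ·) (A : Set α) ∧ #A = k) :
    ∃ X ⊆ s, IsAntichain (· ≤ ·) (X : Set α) ∧ #X = k ∧
      ∀ B ⊆ s, IsAntichain (· ≤ ·) (B : Set α) → #B = k →
        ∀ y ∈ B, ∀ z ∈ X, f y = f z → y ≤ z := by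
  classical
  let T (i : ℕ) : Finset α :=
    s.filter fun y ↦ f y = i ∧ ∃ B ⊆ s, IsAntichain (· ≤ ·) (B : Set α) ∧ #B = k ∧ y ∈ B
  have mem_T {B} (hBs : B ⊆ s) (hB : IsAntichain (· ≤ ·) (B : Set α)) (hBk : #B = k) {y}
      (hy : y ∈ B) : y ∈ T (f y) :=
    mem_filter.2 ⟨hBs hy, rfl, B, hBs, hB, hBk, hy⟩
  let X := s.filter fun z ↦ Maximal (· ∈ T (f z)) z
  have hdom : ∀ i, ∀ y ∈ T i, ∀ z ∈ X, f z = i → y ≤ z := by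
    rintro _ y hy z hz rfl
    have hzT := (mem_filter.1 hz).2
    exact (hf.2 (mem_filter.1 hy).1 (mem_filter.1 hz).1 (mem_filter.1 hy).2.1).elim id (hzT.2 hy)
  have hX : IsAntichain (· ≤ ·) (X : Set α) := by
    intro z₁ hz₁ z₂ hz₂ hne hle
    obtain ⟨-, -, B, hBs, hB, hBk, hz₂B⟩ := mem_filter.1 (mem_filter.1 hz₂).2.1
    obtain ⟨y, hyB, hy⟩ :=
      hf.exists_mem_color_eq (coe_subset.2 hBs) hB hBk (hf.1 z₁ (mem_filter.1 hz₁).1)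
    have hyz₁ : y ≤ z₁ := hdom _ y (hy ▸ mem_T hBs hB hBk hyB) z₁ hz₁ rfl
    have hyz₂ : y = z₂ := hB.eq hyB hz₂B (hyz₁.trans hle)
    exact hne (le_antisymm hle (hyz₂ ▸ hyz₁))
  have hcolors : range k ⊆ X.image f := by
    obtain ⟨A, hAs, hA, hAk⟩ := h₀
    intro i hi
    obtain ⟨y, hyA, rfl⟩ := hf.exists_mem_color_eq (coe_subset.2 hAs) hA hAk (mem_range.1 hi)
    obtain ⟨z, -, hz⟩ := (T (f y)).exists_le_maximal (mem_T hAs hA hAk hyA)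
    obtain ⟨hzs, hzy, -⟩ := mem_filter.1 hz.prop
    exact mem_image.2 ⟨z, mem_filter.2 ⟨hzs, hzy ▸ hz⟩, hzy⟩
  refine ⟨X, filter_subset _ _, hX,
    le_antisymm (hf.card_le (coe_subset.2 (filter_subset _ _)) hX) ?_,
    fun B hBs hB hBk y hy z hz hyz ↦ hdom _ y (mem_T hBs hB hBk hy) z hz hyz.symm⟩
  calc k = #(range k) := (card_range k).symm
    _ ≤ #(X.image f) := card_le_card hcolors
    _ ≤ #X := card_image_le

def HasAntichainAndChainPartition (s : Finset α) (k : ℕ) : Prop :=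
  (∃ A ⊆ s, IsAntichain (· ≤ ·) (A : Set α) ∧ #A = k) ∧ ∃ f, IsChainColoring (s : Set α) k f

theorem HasAntichainAndChainPartition.of_sdiff_chain [DecidableEq α] {s K : Finset α}
    {k k' : ℕ}
    (hs : ∃ A ⊆ s, IsAntichain (· ≤ ·) (A : Set α) ∧ #A = k) (hK : IsChain (· ≤ ·) (K : Set α))
    (hsK : ∀ B ⊆ s \ K, IsAntichain (· ≤ ·) (B : Set α) → #B ≠ k)
    (h : HasAntichainAndChainPartition (s \ K) k') : HasAntichainAndChainPartition s k := by
  obtain ⟨A, hAs, hA, hAk⟩ := hs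
  obtain ⟨⟨A', hA's, hA', hA'k⟩, g, hg⟩ := h
  have hk' : k' < k := by
    by_contra! hkk
    obtain ⟨B, hBA', hBk⟩ := exists_subset_card_eq (hA'k ▸ hkk)
    exact hsK B (hBA'.trans hA's) (hA'.subset (coe_subset.2 hBA')) hBk
  have hg' := (coe_sdiff s K ▸ hg).extend_by_chain hK
  obtain rfl : k = k' + 1 := le_antisymm (hAk ▸ hg'.card_le (coe_subset.2 hAs) hA) hk'
  exact ⟨⟨A, hAs, hA, hAk⟩, _, hg'⟩

theorem HasAntichainAndChainPartition.exists_of_maximal {s : Finset α} {a : α}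
    (ha : Maximal (· ∈ s) a) (ih : ∀ t ⊂ s, ∃ k, HasAntichainAndChainPartition t k) :
    ∃ k, HasAntichainAndChainPartition s k := by
  classical
  obtain ⟨k, ⟨A₀, hA₀s, hA₀, hA₀k⟩, f, hf⟩ := ih _ (erase_ssubset ha.prop)
  obtain ⟨X, hXs, hX, hXk, hdom⟩ := hf.exists_dominating_antichain ⟨A₀, hA₀s, hA₀, hA₀k⟩
  by_cases hXa : ∃ z ∈ X, z ≤ a
  · obtain ⟨z, hzX, hza⟩ := hXa
    set K : Finset α := insert a ((s.erase a).filter fun y ↦ f y = f z ∧ y ≤ z)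
    have hK : IsChain (· ≤ ·) (K : Set α) := by
      rw [coe_insert]
      refine ((hf.isChain_fiber (f z)).mono ?_).insert fun b hb _ ↦ ?_
      · intro y hy
        simp only [coe_filter] at hy ⊢
        exact ⟨hy.1, hy.2.1⟩
      · exact Or.inr ((mem_filter.1 hb).2.2.trans hza)
    have hsK : s \ K ⊆ s.erase a := fun y hy ↦
      mem_erase.2 ⟨fun h ↦ (mem_sdiff.1 hy).2 (h ▸ mem_insert_self a _), (mem_sdiff.1 hy).1⟩
    obtain ⟨k', hk'⟩ := ih _ (hsK.trans_ssubset (erase_ssubset ha.prop))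
    refine ⟨k, .of_sdiff_chain ⟨A₀, hA₀s.trans (erase_subset a s), hA₀, hA₀k⟩ hK
      (fun B hB hBanti hBk ↦ ?_) hk'⟩
    -- every antichain of size `k` has an element of colour `f z` below `z`, hence in `K`
    obtain ⟨y, hyB, hyz⟩ := hf.exists_mem_color_eq (coe_subset.2 (hB.trans hsK)) hBanti hBk
      (hf.1 z (hXs hzX))
    have hyK : y ∈ K := mem_insert_of_mem (mem_filter.2
      ⟨hsK (hB hyB), hyz, hdom B (hB.trans hsK) hBanti hBk y hyB z hzX hyz⟩)
    exact (mem_sdiff.1 (hB hyB)).2 hyK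
  · push Not at hXa
    have haX : a ∉ X := fun h ↦ (mem_erase.1 (hXs h)).1 rfl
    refine ⟨k + 1, ⟨insert a X, insert_subset ha.prop (hXs.trans (erase_subset a s)), ?_,
      by rw [card_insert_of_notMem haX, hXk]⟩, _,
      (coe_erase a s ▸ hf).extend_by_chain IsChain.singleton⟩
    rw [coe_insert]
    refine hX.insert (fun z hz _ ↦ hXa z hz) fun z hz hne hle ↦ hne ?_
    exact le_antisymm hle (ha.2 (erase_subset a s (hXs hz)) hle)

theorem Finset.exists_hasAntichainAndChainPartition (s : Finset α) :
    ∃ k, HasAntichainAndChainPartition s k := by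
  induction s using Finset.strongInduction with
  | H s ih =>
    obtain rfl | hs := s.eq_empty_or_nonempty
    · exact ⟨0, ⟨∅, subset_rfl, by simp, rfl⟩, fun _ ↦ 0, by simp [IsChainColoring]⟩
    obtain ⟨a, ha⟩ := s.exists_maximal hs
    exact HasAntichainAndChainPartition.exists_of_maximal ha ih

end PartialOrder

theorem subset_dilworth_general (V : Type) [DecidableEq V] [PartialOrder V]
    (U : Finset V) :
    sInf {m : ℕ | ∃ C : Fin m → Finset V,
        (∀ i, IsChain (· ≤ ·) ((C i : Finset V) : Set V)) ∧
        U ⊆ Finset.univ.biUnion C} =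
    sSup {n : ℕ | ∃ A : Finset V, A ⊆ U ∧
        IsAntichain (· ≤ ·) ((A : Finset V) : Set V) ∧ n = A.card} := by
  obtain ⟨k, ⟨A, hAU, hA, hAk⟩, f, hf⟩ := U.exists_hasAntichainAndChainPartition
  have weak_duality : ∀ m, (∃ C : Fin m → Finset V, (∀ i, IsChain (· ≤ ·) (C i : Set V)) ∧
      U ⊆ univ.biUnion C) → ∀ B ⊆ U, IsAntichain (· ≤ ·) (B : Set V) → #B ≤ m := by
    rintro m ⟨C, hC, hUC⟩ B hBU hB
    simpa using hB.card_le_card_of_subset_biUnion (fun i _ ↦ hC i) (hBU.trans hUC)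
  have hk : ∃ C : Fin k → Finset V, (∀ i, IsChain (· ≤ ·) (C i : Set V)) ∧ U ⊆ univ.biUnion C :=
    ⟨fun i ↦ U.filter (f · = i), fun i ↦ hf.isChain_fiber i, fun x hx ↦
      mem_biUnion.2 ⟨⟨f x, hf.1 x hx⟩, mem_univ _, mem_filter.2 ⟨hx, rfl⟩⟩⟩
  refine (IsLeast.csInf_eq (a := k) ?_).trans (IsGreatest.csSup_eq ?_).symm
  · exact ⟨hk, fun m hm ↦ hAk ▸ weak_duality m hm A hAU hA⟩
  · refine ⟨⟨A, hAU, hA, hAk.symm⟩, ?_⟩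
    rintro _ ⟨B, hBU, hB, rfl⟩
    exact weak_duality k hk B hBU hB

/-- **Subset version of Dilworth's theorem.** For a finite poset `V` and a subset
`U ⊆ V`, the minimum number of chains of `V` whose union contains `U` equals the maximum
cardinality of an antichain contained in `U`. -/
theorem subset_dilworth (V : Type) [Fintype V] [DecidableEq V] [PartialOrder V]
    (U : Finset V) :
    sInf {m : ℕ | ∃ C : Fin m → Finset V,
        (∀ i, IsChain (· ≤ ·) ((C i : Finset V) : Set V)) ∧
        U ⊆ Finset.univ.biUnion C} =
    sSup {n : ℕ | ∃ A : Finset V, A ⊆ U ∧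
        IsAntichain (· ≤ ·) ((A : Finset V) : Set V) ∧ n = A.card} :=
  subset_dilworth_general V U
end

section
/- For every integer k ≥ 2 there exists a finite partially ordered set (V, ≤) and a greedy chain sequence C_1, …, C_k of length k such that |C_1 ∪ … ∪ C_k| ≤ (3/4)·β_k; moreover in the construction β_k = |V|, so the k greedy chains cover at most 3/4 of the optimal coverage of k chains. -/
/-- A greedy chain sequence: pairwise disjoint chains `C 0, …, C (m-1)` such that each
`C i` has maximum cardinality among all chains contained in the complement of the
previously chosen chains. -/
def GreedyChainSeq (V : Type) [DecidableEq V] [PartialOrder V]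
    {m : ℕ} (C : Fin m → Finset V) : Prop :=
  (∀ i, IsChain (· ≤ ·) ((C i : Finset V) : Set V)) ∧
  (∀ i j, i ≠ j → Disjoint (C i) (C j)) ∧
  (∀ (i : Fin m) (D : Finset V), IsChain (· ≤ ·) ((D : Finset V) : Set V) →
    (∀ v ∈ D, ∀ j, j < i → v ∉ C j) → D.card ≤ (C i).card)

/-- `β_k`: the maximum cardinality of the union of `k` pairwise disjoint chains. -/
noncomputable def betaVal (V : Type) [Fintype V] [DecidableEq V] [PartialOrder V]
    (k : ℕ) : ℕ :=
  sSup {n : ℕ | ∃ C : Fin k → Finset V,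
    (∀ i, IsChain (· ≤ ·) ((C i : Finset V) : Set V)) ∧
    (∀ i j, i ≠ j → Disjoint (C i) (C j)) ∧
    n = (Finset.univ.biUnion C).card}

def GreedyChainsMissQuarter (V : Type) [Fintype V] [DecidableEq V] [PartialOrder V]
    (k : ℕ) : Prop :=
  ∃ C : Fin k → Finset V, GreedyChainSeq V C ∧
    4 * (Finset.univ.biUnion C).card ≤ 3 * betaVal V k ∧
    betaVal V k = Fintype.card V

/-!
On the zigzag `a < b`, `c < d`, `a < d` the greedy choice `{a, d}` leaves the antichain `{b, c}`,
so on `p` disjoint zigzags the `2p` greedy chains `{a, d}, …, {b}, …` cover `3p` of the `4p`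
elements, while the chains `{a, b}, {c, d}` cover all of them. For odd `k = 2q + 3` one adds an
8-element gadget on which greedy takes `{x₁, z₂, y₃}`, then `{y₁, x₃}`, then `{x₂}`, i.e. `6` of
its `8` elements, whereas the three chains `x`, `y`, `z` cover it.

That a chain sequence is greedy is certified by ranks: if chain lengths are non-increasing and, on
the elements not covered by chains longer than `h`, some `r` with values below `h` is strictly
monotone, then every chain there has at most `h` elements.
-/

open Finset

section ChainBounds

variable {V ι : Type*} [PartialOrder V]

theorem IsChain.card_le_of_strictMonoOn {D : Finset V} (hD : IsChain (· ≤ ·) (D : Set V))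
    {s : Set V} {r : V → ℕ} (hr : StrictMonoOn r s) {n : ℕ} (hn : ∀ v ∈ s, r v < n)
    (hDs : (D : Set V) ⊆ s) : D.card ≤ n := by
  have hinj : Set.InjOn r D := by
    intro x hx y hy hxy
    by_contra hne
    rcases hD.lt_of_le hx hy hne with h | h
    · exact (hr (hDs hx) (hDs hy) h).ne hxy
    · exact (hr (hDs hy) (hDs hx) h).ne' hxy
  calc D.card = (D.image r).card := (card_image_of_injOn hinj).symm
    _ ≤ (range n).card := card_le_card fun m hm => by
      obtain ⟨v, hv, rfl⟩ := mem_image.1 hm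
      exact mem_range.2 (hn v (hDs hv))
    _ = n := card_range n

theorem IsAntichain.strictMonoOn {s : Set V} (hs : IsAntichain (· ≤ ·) s) (r : V → ℕ) :
    StrictMonoOn r s :=
  fun _ hx _ hy hxy => absurd hxy (hs.not_lt hx hy)

theorem StrictMonoOn.sumElim {W : Type*} [PartialOrder W] {r₁ : V → ℕ} {r₂ : W → ℕ}
    {s : Set (V ⊕ W)} (h₁ : StrictMonoOn r₁ (Sum.inl ⁻¹' s))
    (h₂ : StrictMonoOn r₂ (Sum.inr ⁻¹' s)) : StrictMonoOn (Sum.elim r₁ r₂) s := by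
  rintro (x | x) hx (y | y) hy hxy
  · exact h₁ hx hy (Sum.inl_lt_inl_iff.1 hxy)
  · exact absurd hxy Sum.not_inl_lt_inr
  · exact absurd hxy Sum.not_inr_lt_inl
  · exact h₂ hx hy (Sum.inr_lt_inr_iff.1 hxy)

theorem StrictMonoOn.sigmaSnd {r : V → ℕ} {s : Set (Σ _ : ι, V)}
    (h : ∀ j, StrictMonoOn r (Sigma.mk (β := fun _ => V) j ⁻¹' s)) :
    StrictMonoOn (fun x => r x.2) s := by
  rintro - hx - hy ⟨i, x, y, hxy⟩
  exact h i hx hy hxy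

end ChainBounds

section Greedy

variable {V : Type} [PartialOrder V]

def outsideLongerChains {m : ℕ} (C : Fin m → Finset V) (h : ℕ) : Set V :=
  {v | ∀ j, h < (C j).card → v ∉ C j}

theorem GreedyChainSeq.of_ranks [DecidableEq V] {m : ℕ} {C : Fin m → Finset V}
    (hchain : ∀ i, IsChain (· ≤ ·) (C i : Set V))
    (hdisj : ∀ i j, i ≠ j → Disjoint (C i) (C j))
    (hanti : Antitone fun i => (C i).card)
    (hrank : ∀ i, ∃ r : V → ℕ, StrictMonoOn r (outsideLongerChains C (C i).card) ∧
      ∀ v ∈ outsideLongerChains C (C i).card, r v < (C i).card) :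
    GreedyChainSeq V C := by
  refine ⟨hchain, hdisj, fun i D hD hfree => ?_⟩
  obtain ⟨r, hr, hrn⟩ := hrank i
  refine hD.card_le_of_strictMonoOn hr hrn fun v hv j hj => hfree v hv j ?_
  exact lt_of_not_ge fun hij => (hanti hij).not_gt hj

theorem betaVal_eq_card_of_chain_partition [Fintype V] [DecidableEq V] {ι : Type*} [Fintype ι]
    {k : ℕ} (lab : V → ι) (hlab : ∀ x y, lab x = lab y → x ≤ y ∨ y ≤ x)
    (hk : Fintype.card ι = k) : betaVal V k = Fintype.card V := by
  let e := Fintype.equivFinOfCardEq hk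
  let C : Fin k → Finset V := fun j => univ.filter fun v => e (lab v) = j
  have hC : ∀ j, IsChain (· ≤ ·) (C j : Set V) := fun j x hx y hy _ =>
    hlab x y (e.injective (by simp_all [C]))
  have hdisj : ∀ i j, i ≠ j → Disjoint (C i) (C j) := fun i j hij =>
    disjoint_filter.2 fun v _ hi hj => hij (hi.symm.trans hj)
  have hcover : univ.biUnion C = univ :=
    eq_univ_of_forall fun v => mem_biUnion.2 ⟨e (lab v), mem_univ _, by simp [C]⟩
  unfold betaVal
  refine le_antisymm (csSup_le ⟨_, C, hC, hdisj, rfl⟩ ?_) (le_csSup ⟨Fintype.card V, ?_⟩ ?_)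
  · rintro n ⟨C', -, -, rfl⟩
    exact card_le_univ _
  · rintro n ⟨C', -, -, rfl⟩
    exact card_le_univ _
  · exact ⟨C, hC, hdisj, by rw [hcover, card_univ]⟩

theorem GreedyChainsMissQuarter.of_chain_partition [Fintype V] [DecidableEq V] {ι : Type*}
    [Fintype ι] {k : ℕ} {C : Fin k → Finset V} (hC : GreedyChainSeq V C) (lab : V → ι)
    (hlab : ∀ x y, lab x = lab y → x ≤ y ∨ y ≤ x) (hk : Fintype.card ι = k)
    (hcard : 4 * (univ.biUnion C).card ≤ 3 * Fintype.card V) : GreedyChainsMissQuarter V k := by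
  have hβ := betaVal_eq_card_of_chain_partition lab hlab hk
  exact ⟨C, hC, hβ ▸ hcard, hβ⟩

end Greedy

inductive Zigzag
  | a | b | c | d
  deriving DecidableEq

namespace Zigzag

instance : Fintype Zigzag := ⟨{a, b, c, d}, fun x => by cases x <;> decide⟩

def ble : Zigzag → Zigzag → Bool
  | a, b | a, d | c, d => true
  | x, y => x == y

instance : PartialOrder Zigzag where
  le x y := ble x y
  le_refl x := by cases x <;> rfl
  le_trans x y z := by cases x <;> cases y <;> cases z <;> decide
  le_antisymm x y := by cases x <;> cases y <;> decide

instance : DecidableLE Zigzag := fun x y => inferInstanceAs (Decidable (ble x y))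

instance : DecidableLT Zigzag := decidableLTOfDecidableLE

theorem card_eq : Fintype.card Zigzag = 4 := rfl

def height : Zigzag → ℕ
  | a | c => 0
  | b | d => 1

theorem height_lt_two (x : Zigzag) : height x < 2 := by
  cases x <;> decide

theorem strictMono_height : StrictMono height := by
  intro x y; cases x <;> cases y <;> decide

theorem isAntichain_b_c : IsAntichain (· ≤ ·) ({b, c} : Set Zigzag) := by
  rintro x (rfl | rfl) y (rfl | rfl) hne <;>
    first | exact absurd rfl hne | exact fun h => absurd h (by decide)

def chainIndex : Zigzag → Bool
  | a | b => false
  | c | d => true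

theorem le_total_of_chainIndex_eq (x y : Zigzag) (h : chainIndex x = chainIndex y) :
    x ≤ y ∨ y ≤ x := by
  revert h; cases x <;> cases y <;> decide

end Zigzag

abbrev Zigzags (p : ℕ) : Type := Σ _ : Fin p, Zigzag

namespace Zigzags

open Zigzag

variable (p : ℕ) in
def greedy : Fin (p + p) → Finset (Zigzags p) :=
  Fin.append (fun j => {⟨j, a⟩, ⟨j, d⟩}) (fun j => {⟨j, b⟩})

variable {p : ℕ}

theorem greedy_castAdd (j : Fin p) : greedy p (Fin.castAdd p j) = {⟨j, a⟩, ⟨j, d⟩} :=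
  Fin.append_left ..

theorem greedy_natAdd (j : Fin p) : greedy p (Fin.natAdd p j) = {⟨j, b⟩} :=
  Fin.append_right ..

theorem card_greedy (i : Fin (p + p)) : (greedy p i).card = if (i : ℕ) < p then 2 else 1 := by
  induction i using Fin.addCases <;> simp only [greedy_castAdd, greedy_natAdd] <;> simp

theorem isChain_greedy (i : Fin (p + p)) : IsChain (· ≤ ·) (greedy p i : Set (Zigzags p)) := by
  induction i using Fin.addCases <;>
    simp only [greedy_castAdd, greedy_natAdd, coe_pair, coe_singleton]
  · exact IsChain.pair (Sigma.mk_le_mk_iff.2 (by decide))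
  · exact IsChain.singleton

theorem disjoint_greedy (i j : Fin (p + p)) (hij : i ≠ j) :
    Disjoint (greedy p i) (greedy p j) := by
  induction i using Fin.addCases <;> induction j using Fin.addCases <;>
    simp only [greedy_castAdd, greedy_natAdd] <;> simp_all [eq_comm]

theorem card_biUnion_greedy : (univ.biUnion (greedy p)).card = 3 * p := by
  rw [card_biUnion fun i _ j _ hij => disjoint_greedy i j hij, Fin.sum_univ_add]
  simp only [greedy_castAdd, greedy_natAdd]
  simp
  ring

theorem card_eq : Fintype.card (Zigzags p) = 4 * p := by
  simp [Fintype.card_sigma, Zigzag.card_eq, mul_comm]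

def height (v : Zigzags p) : ℕ := Zigzag.height v.2

theorem strictMono_height : StrictMono (height (p := p)) := by
  rintro - - ⟨j, x, y, h⟩
  exact Zigzag.strictMono_height h

def chainIndex (v : Zigzags p) : Fin p × Bool := (v.1, Zigzag.chainIndex v.2)

theorem le_total_of_chainIndex_eq (x y : Zigzags p) (h : chainIndex x = chainIndex y) :
    x ≤ y ∨ y ≤ x := by
  obtain ⟨j, x⟩ := x
  obtain ⟨j', y⟩ := y
  obtain ⟨rfl, h⟩ := Prod.mk.inj h
  simpa using Zigzag.le_total_of_chainIndex_eq x y h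

theorem preimage_outsideLongerChains_one_subset (j : Fin p) :
    Sigma.mk j ⁻¹' outsideLongerChains (greedy p) 1 ⊆ {b, c} := by
  intro x hx
  have := hx (Fin.castAdd p j) (by simp [card_greedy])
  rw [greedy_castAdd] at this
  cases x <;> simp_all

theorem greedyChainSeq_greedy : GreedyChainSeq (Zigzags p) (greedy p) := by
  refine .of_ranks isChain_greedy disjoint_greedy (fun i j hij => ?_) fun i => ?_
  · have : (i : ℕ) ≤ j := hij
    simp only [card_greedy]
    split_ifs <;> omega
  rw [card_greedy]
  split_ifs
  · exact ⟨height, strictMono_height.strictMonoOn _, fun v _ => height_lt_two v.2⟩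
  · exact ⟨_, .sigmaSnd fun j =>
      (isAntichain_b_c.strictMonoOn fun _ => 0).mono (preimage_outsideLongerChains_one_subset j),
      fun _ _ => one_pos⟩

variable (p) in
theorem greedyChainsMissQuarter : GreedyChainsMissQuarter (Zigzags p) (p + p) := by
  refine .of_chain_partition greedyChainSeq_greedy chainIndex le_total_of_chainIndex_eq
    (by simp; ring) ?_
  rw [card_biUnion_greedy, card_eq]
  omega

end Zigzags

inductive OddGadget
  | x₁ | x₂ | x₃ | y₁ | y₂ | y₃ | z₁ | z₂
  deriving DecidableEq

namespace OddGadget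

instance : Fintype OddGadget :=
  ⟨{x₁, x₂, x₃, y₁, y₂, y₃, z₁, z₂}, fun v => by cases v <;> decide⟩

def ble : OddGadget → OddGadget → Bool
  | x₁, x₂ | x₁, x₃ | x₁, y₃ | x₁, z₂ | x₂, x₃ | y₁, x₃ | y₁, y₂ | y₁, y₃ | y₂, y₃
  | z₁, y₃ | z₁, z₂ | z₂, y₃ => true
  | u, v => u == v

instance : PartialOrder OddGadget where
  le u v := ble u v
  le_refl u := by cases u <;> rfl
  le_trans u v w := by cases u <;> cases v <;> cases w <;> decide
  le_antisymm u v := by cases u <;> cases v <;> decide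

instance : DecidableLE OddGadget := fun u v => inferInstanceAs (Decidable (ble u v))

instance : DecidableLT OddGadget := decidableLTOfDecidableLE

theorem card_eq : Fintype.card OddGadget = 8 := rfl

def height : OddGadget → ℕ
  | x₁ | y₁ | z₁ => 0
  | x₂ | y₂ | z₂ => 1
  | x₃ | y₃ => 2

theorem height_lt_three (v : OddGadget) : height v < 3 := by
  cases v <;> decide

theorem strictMono_height : StrictMono height := by
  intro u v; cases u <;> cases v <;> decide

def height₂ : OddGadget → ℕ
  | x₃ | y₂ => 1
  | _ => 0

theorem height₂_lt_two (v : OddGadget) : height₂ v < 2 := by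
  cases v <;> decide

theorem strictMonoOn_height₂ : StrictMonoOn height₂ ({x₁, z₂, y₃}ᶜ : Set OddGadget) := by
  intro u hu v hv; revert hu hv; cases u <;> cases v <;> simp <;> decide

theorem isAntichain_x₂_y₂_z₁ : IsAntichain (· ≤ ·) ({x₂, y₂, z₁} : Set OddGadget) := by
  rintro u (rfl | rfl | rfl) v (rfl | rfl | rfl) hne <;>
    first | exact absurd rfl hne | exact fun h => absurd h (by decide)

def chainIndex : OddGadget → Fin 3
  | x₁ | x₂ | x₃ => 0
  | y₁ | y₂ | y₃ => 1
  | z₁ | z₂ => 2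

theorem le_total_of_chainIndex_eq (u v : OddGadget) (h : chainIndex u = chainIndex v) :
    u ≤ v ∨ v ≤ u := by
  revert h; cases u <;> cases v <;> decide

end OddGadget

abbrev OddPoset (q : ℕ) : Type := OddGadget ⊕ Zigzags q

namespace OddPoset

open OddGadget Zigzag Sum

variable (q : ℕ) in
def greedy : Fin (q + 1 + (q + 1) + 1) → Finset (OddPoset q) :=
  Fin.cons {inl x₁, inl z₂, inl y₃}
    (Fin.append (Fin.cons {inl y₁, inl x₃} fun j => {inr ⟨j, a⟩, inr ⟨j, d⟩})
      (Fin.cons {inl x₂} fun j => {inr ⟨j, b⟩}))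

variable {q : ℕ}

@[elab_as_elim]
theorem index_induction {P : Fin (q + 1 + (q + 1) + 1) → Prop} (h₃ : P 0)
    (h₂ : P (Fin.castAdd (q + 1) 0).succ)
    (h₂' : ∀ j : Fin q, P (Fin.castAdd (q + 1) j.succ).succ)
    (h₁ : P (Fin.natAdd (q + 1) 0).succ)
    (h₁' : ∀ j : Fin q, P (Fin.natAdd (q + 1) j.succ).succ)
    (i : Fin (q + 1 + (q + 1) + 1)) : P i := by
  induction i using Fin.cases with
  | zero => exact h₃
  | succ i =>
    induction i using Fin.addCases with
    | left i => induction i using Fin.cases <;> simp only [*]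
    | right i => induction i using Fin.cases <;> simp only [*]

theorem greedy_zero : greedy q 0 = {inl x₁, inl z₂, inl y₃} := rfl

theorem greedy_succ_castAdd_zero :
    greedy q (Fin.castAdd (q + 1) 0).succ = {inl y₁, inl x₃} := by
  simp only [greedy, Fin.cons_succ, Fin.append_left, Fin.cons_zero]

theorem greedy_succ_castAdd_succ (j : Fin q) :
    greedy q (Fin.castAdd (q + 1) j.succ).succ = {inr ⟨j, a⟩, inr ⟨j, d⟩} := by
  simp only [greedy, Fin.cons_succ, Fin.append_left]

theorem greedy_succ_natAdd_zero : greedy q (Fin.natAdd (q + 1) 0).succ = {inl x₂} := by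
  simp only [greedy, Fin.cons_succ, Fin.append_right, Fin.cons_zero]

theorem greedy_succ_natAdd_succ (j : Fin q) :
    greedy q (Fin.natAdd (q + 1) j.succ).succ = {inr ⟨j, b⟩} := by
  simp only [greedy, Fin.cons_succ, Fin.append_right]

theorem card_greedy (i : Fin (q + 1 + (q + 1) + 1)) :
    (greedy q i).card = if (i : ℕ) = 0 then 3 else if (i : ℕ) ≤ q + 1 then 2 else 1 := by
  induction i using index_induction <;>
    simp only [greedy_zero, greedy_succ_castAdd_zero, greedy_succ_castAdd_succ,
      greedy_succ_natAdd_zero, greedy_succ_natAdd_succ] <;> simp +arith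

theorem isChain_greedy (i : Fin (q + 1 + (q + 1) + 1)) :
    IsChain (· ≤ ·) (greedy q i : Set (OddPoset q)) := by
  induction i using index_induction <;>
    simp only [greedy_zero, greedy_succ_castAdd_zero, greedy_succ_castAdd_succ,
      greedy_succ_natAdd_zero, greedy_succ_natAdd_succ, coe_insert, coe_singleton] <;>
    intro u hu v hv _ <;> simp only [Set.mem_insert_iff, Set.mem_singleton_iff] at hu hv <;>
    rcases hu with rfl | rfl | rfl <;> rcases hv with rfl | rfl | rfl <;> simp <;> decide

theorem disjoint_greedy (i j : Fin (q + 1 + (q + 1) + 1)) (hij : i ≠ j) :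
    Disjoint (greedy q i) (greedy q j) := by
  induction i using index_induction <;> induction j using index_induction <;>
    simp only [greedy_zero, greedy_succ_castAdd_zero, greedy_succ_castAdd_succ,
      greedy_succ_natAdd_zero, greedy_succ_natAdd_succ] <;> simp_all [eq_comm]

theorem card_biUnion_greedy : (univ.biUnion (greedy q)).card = 3 * q + 6 := by
  rw [card_biUnion fun i _ j _ hij => disjoint_greedy i j hij]
  simp only [Fin.sum_univ_succ (n := q + 1 + (q + 1)), Fin.sum_univ_add,
    Fin.sum_univ_succ (n := q), greedy_zero, greedy_succ_castAdd_zero, greedy_succ_castAdd_succ,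
    greedy_succ_natAdd_zero, greedy_succ_natAdd_succ]
  simp
  ring

theorem card_eq : Fintype.card (OddPoset q) = 4 * q + 8 := by
  rw [Fintype.card_sum, Zigzags.card_eq, OddGadget.card_eq, add_comm]

theorem preimage_inl_outsideLongerChains_two_subset :
    inl ⁻¹' outsideLongerChains (greedy q) 2 ⊆ {x₁, z₂, y₃}ᶜ := by
  intro u hu
  have := hu 0 (by simp [card_greedy])
  simp_all [greedy_zero]

theorem preimage_inl_outsideLongerChains_one_subset :
    inl ⁻¹' outsideLongerChains (greedy q) 1 ⊆ {x₂, y₂, z₁} := by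
  intro u hu
  have h₃ := hu 0 (by simp [card_greedy])
  have h₂ := hu (Fin.castAdd (q + 1) 0).succ (by simp [card_greedy])
  rw [greedy_zero] at h₃
  rw [greedy_succ_castAdd_zero] at h₂
  cases u <;> simp_all

theorem preimage_inr_outsideLongerChains_one_subset (j : Fin q) :
    Sigma.mk j ⁻¹' (inr ⁻¹' outsideLongerChains (greedy q) 1) ⊆ {b, c} := by
  intro x hx
  have := hx (Fin.castAdd (q + 1) j.succ).succ (by simp [card_greedy])
  rw [greedy_succ_castAdd_succ] at this
  cases x <;> simp_all

theorem greedyChainSeq_greedy : GreedyChainSeq (OddPoset q) (greedy q) := by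
  refine .of_ranks isChain_greedy disjoint_greedy (fun i j hij => ?_) fun i => ?_
  · have : (i : ℕ) ≤ j := hij
    simp only [card_greedy]
    split_ifs <;> omega
  rw [card_greedy]
  split_ifs
  · refine ⟨_, .sumElim (OddGadget.strictMono_height.strictMonoOn _)
      (Zigzags.strictMono_height.strictMonoOn _), ?_⟩
    rintro (u | v) -
    · exact height_lt_three u
    · exact (Zigzag.height_lt_two v.2).trans (by norm_num)
  · refine ⟨_, .sumElim (strictMonoOn_height₂.mono preimage_inl_outsideLongerChains_two_subset)
      (Zigzags.strictMono_height.strictMonoOn _), ?_⟩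
    rintro (u | v) -
    · exact height₂_lt_two u
    · exact Zigzag.height_lt_two v.2
  · refine ⟨_, .sumElim
      ((isAntichain_x₂_y₂_z₁.strictMonoOn fun _ => 0).mono
        preimage_inl_outsideLongerChains_one_subset)
      (.sigmaSnd fun j => (isAntichain_b_c.strictMonoOn fun _ => 0).mono
        (preimage_inr_outsideLongerChains_one_subset j)), ?_⟩
    rintro (u | v) - <;> exact one_pos

variable (q) in
theorem greedyChainsMissQuarter :
    GreedyChainsMissQuarter (OddPoset q) (q + 1 + (q + 1) + 1) := by
  refine .of_chain_partition greedyChainSeq_greedy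
    (Sum.map OddGadget.chainIndex Zigzags.chainIndex) ?_ (by simp; ring) ?_
  · rintro (u | u) (v | v) h <;>
      simp only [Sum.map_inl, Sum.map_inr, inl.injEq, inr.injEq, reduceCtorEq] at h
    · simpa using OddGadget.le_total_of_chainIndex_eq u v h
    · simpa using Zigzags.le_total_of_chainIndex_eq u v h
  rw [card_biUnion_greedy, card_eq]
  omega

end OddPoset

/-- For every `k ≥ 2` there is a finite poset on which some greedy chain sequence of
length `k` covers at most `3/4` of `β_k`; moreover in the construction `β_k = |V|`. -/
theorem greedy_chains_cover_three_quarters (k : ℕ) (hk : 2 ≤ k) :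
    ∃ (V : Type) (f : Fintype V) (d : DecidableEq V) (p : PartialOrder V),
      @GreedyChainsMissQuarter V f d p k := by
  obtain ⟨p, rfl⟩ | ⟨q, rfl⟩ : (∃ p, k = p + p) ∨ ∃ q, k = q + 1 + (q + 1) + 1 := by
    rcases Nat.even_or_odd' k with ⟨n, rfl | rfl⟩
    · exact .inl ⟨n, two_mul n⟩
    · exact .inr ⟨n - 1, by omega⟩
  · exact ⟨_, _, _, _, Zigzags.greedyChainsMissQuarter p⟩
  · exact ⟨_, _, _, _, OddPoset.greedyChainsMissQuarter q⟩
end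

section
/- There exists a finite partially ordered set (V, ≤) with exactly 16 elements such that β_2 = 16 (two disjoint chains cover all of V), and there is a greedy chain sequence C_1, C_2 with |C_1| = 8 and |C_2| = 4, so that the two greedy chains cover exactly 12 = (3/4)·β_2 elements. -/
def GreedyChainsExample2 (V : Type) [Fintype V] [DecidableEq V] [PartialOrder V] : Prop :=
  Fintype.card V = 16 ∧ betaVal V 2 = 16 ∧
  ∃ C : Fin 2 → Finset V, GreedyChainSeq V C ∧
    (C 0).card = 8 ∧ (C 1).card = 4 ∧ (Finset.univ.biUnion C).card = 12

/-!
Take two rows `(r, 0) < ⋯ < (r, 7)`, `r = 0, 1`, and add `(1, i) < (0, j)` for `i < 4 ≤ j`.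
The rows cover everything, so `β_2 = 16`. Comparable elements have different column indices, so
no chain is longer than 8, and `(1, 0), …, (1, 3), (0, 4), …, (0, 7)` is a longest chain. What it
leaves are the two mutually incomparable 4-chains `(0, 0..3)` and `(1, 4..7)`: comparable elements
there have different indices mod 4, so the second greedy chain has only 4 elements.
-/

open Finset

theorem IsChain.card_le_of_injOn_le {α β : Type*} [Preorder α] [Fintype β] {D : Finset α}
    (hD : IsChain (· ≤ ·) (D : Set α)) (f : α → β)
    (hf : ∀ x ∈ D, ∀ y ∈ D, x ≤ y → f x = f y → x = y) :
    #D ≤ Fintype.card β := by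
  rw [← card_univ]
  refine card_le_card_of_injOn f (fun _ _ => mem_coe.2 (mem_univ _)) fun x hx y hy hxy => ?_
  rcases hD.total hx hy with hle | hle
  · exact hf x hx y hy hle hxy
  · exact (hf y hy x hx hle hxy.symm).symm

instance Finset.decidableIsChain {α : Type*} [DecidableEq α] {r : α → α → Prop} [DecidableRel r]
    (s : Finset α) : Decidable (IsChain r (s : Set α)) :=
  decidable_of_iff (∀ x ∈ s, ∀ y ∈ s, x ≠ y → r x y ∨ r y x) Iff.rfl

theorem betaVal_eq_card_of_cover {V : Type} [Fintype V] [DecidableEq V] [PartialOrder V] {k : ℕ}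
    (C : Fin k → Finset V) (hchain : ∀ i, IsChain (· ≤ ·) (C i : Set V))
    (hdisj : ∀ i j, i ≠ j → Disjoint (C i) (C j)) (hcover : univ.biUnion C = univ) :
    betaVal V k = Fintype.card V := by
  refine le_antisymm (csSup_le ⟨_, C, hchain, hdisj, rfl⟩ ?bound)
    (le_csSup ⟨_, ?bound⟩ ⟨C, hchain, hdisj, by rw [hcover, card_univ]⟩)
  rintro n ⟨C, -, -, rfl⟩
  exact card_le_univ _

theorem greedyChainSeq_two {V : Type} [DecidableEq V] [PartialOrder V] {C₀ C₁ : Finset V}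
    (h₀ : IsChain (· ≤ ·) (C₀ : Set V)) (h₁ : IsChain (· ≤ ·) (C₁ : Set V))
    (hdisj : Disjoint C₀ C₁)
    (hmax₀ : ∀ D : Finset V, IsChain (· ≤ ·) (D : Set V) → #D ≤ #C₀)
    (hmax₁ : ∀ D : Finset V, IsChain (· ≤ ·) (D : Set V) → Disjoint D C₀ → #D ≤ #C₁) :
    GreedyChainSeq V ![C₀, C₁] := by
  refine ⟨fun i => ?_, fun i j hij => ?_, fun i D hD hprev => ?_⟩
  · fin_cases i
    exacts [h₀, h₁]
  · fin_cases i <;> fin_cases j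
    all_goals first | exact absurd rfl hij | simpa using hdisj | simpa using hdisj.symm
  · fin_cases i
    · exact hmax₀ D hD
    · exact hmax₁ D hD (disjoint_left.2 fun v hv => hprev v hv 0 (by decide))

def TwoRows : Type := Fin 2 × Fin 8

namespace TwoRows

instance : DecidableEq TwoRows := inferInstanceAs (DecidableEq (Fin 2 × Fin 8))
instance : Fintype TwoRows := inferInstanceAs (Fintype (Fin 2 × Fin 8))

def Le (x y : TwoRows) : Prop :=
  (x.1 = y.1 ∧ x.2 ≤ y.2) ∨ (x.1 = 1 ∧ y.1 = 0 ∧ x.2 < 4 ∧ 4 ≤ y.2)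

instance : DecidableRel Le := fun _ _ => by unfold Le; infer_instance

instance : PartialOrder TwoRows where
  le := Le
  le_refl x := Or.inl ⟨rfl, le_rfl⟩
  le_trans := by decide
  le_antisymm := by decide

instance : DecidableRel (α := TwoRows) (· ≤ ·) := inferInstanceAs (DecidableRel Le)

def row (r : Fin 2) : Finset TwoRows := univ.filter fun x => x.1 = r

def longChain : Finset TwoRows :=
  univ.filter fun x => (x.1 = 1 ∧ x.2 < 4) ∨ (x.1 = 0 ∧ 4 ≤ x.2)

def shortChain : Finset TwoRows := univ.filter fun x => x.1 = 0 ∧ x.2 < 4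

theorem eq_of_le_of_index_eq : ∀ x y : TwoRows, x ≤ y → x.2 = y.2 → x = y := by decide

theorem eq_of_le_of_index_mod_eq : ∀ x y : TwoRows, x ≤ y → x ∉ longChain → y ∉ longChain →
    (x.2 : ℕ) % 4 = (y.2 : ℕ) % 4 → x = y := by decide

theorem card_le_eight (D : Finset TwoRows) (hD : IsChain (· ≤ ·) (D : Set TwoRows)) :
    #D ≤ 8 :=
  hD.card_le_of_injOn_le (·.2) fun x _ y _ => eq_of_le_of_index_eq x y

theorem card_le_four (D : Finset TwoRows) (hD : IsChain (· ≤ ·) (D : Set TwoRows))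
    (hdisj : Disjoint D longChain) : #D ≤ 4 :=
  hD.card_le_of_injOn_le (fun x => (⟨x.2 % 4, Nat.mod_lt _ (by norm_num)⟩ : Fin 4))
    fun x hx y hy hle hmod => eq_of_le_of_index_mod_eq x y hle
      (disjoint_left.1 hdisj hx) (disjoint_left.1 hdisj hy) (Fin.mk.inj hmod)

theorem betaVal_two : betaVal TwoRows 2 = 16 :=
  betaVal_eq_card_of_cover ![row 0, row 1] (by decide) (by decide) (by decide)

theorem greedyChainSeq_long_short : GreedyChainSeq TwoRows ![longChain, shortChain] :=
  greedyChainSeq_two (by decide) (by decide) (by decide) card_le_eight card_le_four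

end TwoRows

/-- There is a 16-element finite poset with `β_2 = 16` admitting a greedy chain sequence
`C_1, C_2` with `|C_1| = 8` and `|C_2| = 4`, thus covering exactly `12 = (3/4)·β_2`
elements. -/
theorem greedy_chains_example_k2 :
    ∃ (V : Type) (f : Fintype V) (d : DecidableEq V) (p : PartialOrder V),
      @GreedyChainsExample2 V f d p :=
  ⟨TwoRows, inferInstance, inferInstance, inferInstance, rfl, TwoRows.betaVal_two,
    ![TwoRows.longChain, TwoRows.shortChain], TwoRows.greedyChainSeq_long_short,
    by decide, by decide, by decide⟩
end

section
/- Let (V, ≤) be a finite partially ordered set and k a positive integer. Let C_1, …, C_m be a greedy chain sequence such that |C_i| > k for every i ≤ m and such that every chain contained in V ∖ (C_1 ∪ … ∪ C_m) has cardinality at most k. Then |V ∖ (C_1 ∪ … ∪ C_m)| + k·m ≤ H_{|V|} · α_k, where H_n = Σ_{j=1}^{n} 1/j is the n-th harmonic number; that is, the chain partition formed by C_1, …, C_m together with singletons for the remaining elements has k-norm at most H_{|V|} times the minimum k-norm α_k of a chain partition. -/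
/-- `α_k`: the maximum cardinality of the union of `k` pairwise disjoint antichains,
which by Greene–Kleitman equals the minimum `k`-norm of a chain partition. -/
noncomputable def alphaVal (V : Type) [Fintype V] [DecidableEq V] [PartialOrder V]
    (k : ℕ) : ℕ :=
  sSup {n : ℕ | ∃ A : Fin k → Finset V,
    (∀ i, IsAntichain (· ≤ ·) ((A i : Finset V) : Set V)) ∧
    (∀ i j, i ≠ j → Disjoint (A i) (A j)) ∧
    n = (Finset.univ.biUnion A).card}

open Finset Function

/-!
Let `U i` be the set of elements not covered by `C 0, …, C (i-1)`. Every chain in `U i` has at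
most `ℓ = |C i|` elements, so by Mirsky's theorem `U i` splits into `ℓ` antichains (the level sets
of the height function), and the `k` largest of them cover at least `k |U i| / ℓ` elements; hence
`k |U i| ≤ |C i| α_k`. Since `|C i| / |U i| ≤ H_{|U i|} - H_{|U (i+1)|}`, each greedy chain costs
at most `α_k` times a harmonic decrement, and these telescope to
`k m ≤ α_k (H_{|V|} - H_{|U m|})`. Chains in the remainder `U m` have at most `k` elements, so it
is a union of `k` antichains and `|U m| ≤ α_k`, which is at most `α_k H_{|U m|}` unless `U m = ∅`.
-/

lemma div_le_harmonic_sub_harmonic {a b : ℕ} (hab : a ≤ b) :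
    ((b - a : ℕ) : ℚ) / b ≤ harmonic b - harmonic a := by
  rw [harmonic, harmonic, ← sum_Ico_eq_sub _ hab]
  calc ((b - a : ℕ) : ℚ) / b = ∑ _i ∈ Ico a b, (b : ℚ)⁻¹ := by simp [div_eq_mul_inv]
    _ ≤ ∑ i ∈ Ico a b, ((i + 1 : ℕ) : ℚ)⁻¹ := by
      gcongr with i hi
      exact_mod_cast (mem_Ico.1 hi).2

lemma natCast_le_mul_harmonic_sub {k α a b : ℕ} (hab : a < b) (h : k * b ≤ (b - a) * α) :
    (k : ℚ) ≤ α * (harmonic b - harmonic a) := by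
  have hb : (0 : ℚ) < b := by exact_mod_cast (Nat.zero_le a).trans_lt hab
  calc (k : ℚ) ≤ α * (((b - a : ℕ) : ℚ) / b) := by
        rw [mul_div_assoc', le_div_iff₀ hb]
        exact_mod_cast (by linarith [h] : k * b ≤ α * (b - a))
    _ ≤ α * (harmonic b - harmonic a) := by gcongr; exact div_le_harmonic_sub_harmonic hab.le

lemma natCast_le_mul_harmonic {r α : ℕ} (h : r ≤ α) : (r : ℚ) ≤ α * harmonic r := by
  rcases Nat.eq_zero_or_pos r with rfl | hr
  · simp
  · simpa using natCast_le_mul_harmonic_sub hr (Nat.mul_le_mul_left r h)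

lemma natCast_mul_le_mul_harmonic_telescope {k α m : ℕ} (r : ℕ → ℕ)
    (h : ∀ i < m, r (i + 1) < r i ∧ k * r i ≤ (r i - r (i + 1)) * α) :
    (k * m : ℚ) ≤ α * (harmonic (r 0) - harmonic (r m)) := by
  calc (k * m : ℚ) = ∑ i ∈ range m, (k : ℚ) := by simp [mul_comm]
    _ ≤ ∑ i ∈ range m, α * (harmonic (r i) - harmonic (r (i + 1))) := by
      gcongr with i hi
      exact natCast_le_mul_harmonic_sub (h i (mem_range.1 hi)).1 (h i (mem_range.1 hi)).2
    _ = α * (harmonic (r 0) - harmonic (r m)) := by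
      rw [← mul_sum, sum_range_sub' (fun i => harmonic (r i))]

lemma Fin.exists_embedding_nsmul_sum_le {M : Type*} [AddCommMonoid M] [LinearOrder M]
    [IsOrderedAddMonoid M] {k n : ℕ} (hkn : k ≤ n) (f : Fin n → M) :
    ∃ g : Fin k ↪ Fin n, k • ∑ j, f j ≤ n • ∑ i, f (g i) := by
  rcases Nat.eq_zero_or_pos n with rfl | hn
  · obtain rfl : k = 0 := Nat.le_zero.1 hkn
    exact ⟨⟨Fin.elim0, fun i => i.elim0⟩, by simp⟩
  have : NeZero n := ⟨hn.ne'⟩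
  -- Average over the `n` cyclic windows `t, t + 1, …, t + k - 1`.
  let window (t : Fin n) : Fin k ↪ Fin n :=
    (Fin.castLEEmb hkn).trans (Equiv.addLeft t).toEmbedding
  obtain ⟨t, -, ht⟩ := exists_max_image univ (fun t => ∑ i, f (window t i)) univ_nonempty
  refine ⟨window t, ?_⟩
  calc k • ∑ j, f j = ∑ i : Fin k, ∑ t, f (window t i) := by
        have (c : Fin n) : ∑ t, f (t + c) = ∑ j, f j := Equiv.sum_comp (Equiv.addRight c) f
        simp [window, this]
    _ = ∑ s, ∑ i, f (window s i) := sum_comm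
    _ ≤ n • ∑ i, f (window t i) := by
      simpa using sum_le_card_nsmul univ _ _ fun s _ => ht s (mem_univ s)

lemma LTSeries.length_lt_of_chain_card_le {α : Type*} [Preorder α] {ℓ : ℕ}
    (h : ∀ s : Finset α, IsChain (· ≤ ·) (s : Set α) → #s ≤ ℓ) (p : LTSeries α) :
    p.length < ℓ := by
  classical
  have hchain : IsChain (· ≤ ·) ((univ.image p : Finset α) : Set α) := by
    rw [coe_image, coe_univ, Set.image_univ]
    exact p.strictMono.monotone.isChain_range
  have := h _ hchain
  rw [card_image_of_injective _ p.strictMono.injective, card_univ, Fintype.card_fin] at this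
  omega

lemma exists_strictMono_fin_of_chain_card_le {α : Type*} [PartialOrder α] {ℓ : ℕ}
    (h : ∀ s : Finset α, IsChain (· ≤ ·) (s : Set α) → #s ≤ ℓ) :
    ∃ f : α → Fin ℓ, StrictMono f := by
  have hheight (x : α) : Order.height x < ℓ := by
    have hℓ : 0 < ℓ := by
      simpa using LTSeries.length_lt_of_chain_card_le h (RelSeries.singleton _ x)
    calc Order.height x ≤ (ℓ - 1 : ℕ) := Order.height_le_iff.2 fun p _ => by
          have := p.length_lt_of_chain_card_le h
          exact_mod_cast (by omega : p.length ≤ ℓ - 1)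
      _ < ℓ := by exact_mod_cast Nat.sub_lt hℓ one_pos
  have hcoe (x : α) : ((Order.height x).toNat : ℕ∞) = Order.height x :=
    ENat.natCast_toNat (hheight x).ne_top
  refine ⟨fun x => ⟨(Order.height x).toNat, by exact_mod_cast (hcoe x).symm ▸ hheight x⟩,
    fun x y hxy => ?_⟩
  rw [Fin.mk_lt_mk, ← Nat.cast_lt (α := ℕ∞), hcoe, hcoe]
  exact Order.height_strictMono hxy ((hheight x).trans_le le_top)

section Poset

variable {V : Type} [DecidableEq V] [PartialOrder V]

lemma exists_antichain_partition_of_chain_card_le (U : Finset V) {ℓ : ℕ}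
    (h : ∀ D : Finset V, IsChain (· ≤ ·) (D : Set V) → D ⊆ U → #D ≤ ℓ) :
    ∃ P : Fin ℓ → Finset V, (∀ i, IsAntichain (· ≤ ·) (P i : Set V)) ∧
      Pairwise (Disjoint on P) ∧ univ.biUnion P = U := by
  obtain ⟨f, hf⟩ := exists_strictMono_fin_of_chain_card_le (α := U) fun s hs => by
    simpa using h (s.map (Embedding.subtype _))
      (by simpa using hs.image (OrderEmbedding.subtype _))
      (fun _ hx => by obtain ⟨y, -, rfl⟩ := mem_map.1 hx; exact y.2)
  refine ⟨fun i => ({x | f x = i} : Finset U).map (Embedding.subtype _), ?_, ?_, ?_⟩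
  · intro i x hxi y hyi hne hle
    simp only [coe_map, Set.mem_image, coe_filter, mem_univ, true_and, Set.mem_ofPred_eq]
      at hxi hyi
    obtain ⟨⟨x, hx⟩, hxi, rfl⟩ := hxi
    obtain ⟨⟨y, hy⟩, hyi, rfl⟩ := hyi
    have hlt : (⟨x, hx⟩ : U) < ⟨y, hy⟩ := lt_of_le_of_ne (α := V) hle hne
    exact (hf hlt).ne (hxi.trans hyi.symm)
  · intro i j hij
    simp only [onFun, disjoint_left, mem_map, mem_filter, mem_univ, true_and]
    rintro _ ⟨x, rfl, rfl⟩ ⟨y, hyx, hxy⟩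
    exact hij (Subtype.val_injective hxy ▸ hyx)
  · ext x
    simp only [mem_biUnion, mem_univ, true_and, mem_map, mem_filter, Embedding.subtype]
    exact ⟨fun ⟨_, y, _, hy⟩ => hy ▸ y.2, fun hx => ⟨f ⟨x, hx⟩, ⟨x, hx⟩, rfl, rfl⟩⟩

variable [Fintype V]

lemma le_alphaVal {k : ℕ} (A : Fin k → Finset V) (hA : ∀ i, IsAntichain (· ≤ ·) (A i : Set V))
    (hdisj : Pairwise (Disjoint on A)) : #(univ.biUnion A) ≤ alphaVal V k :=
  le_csSup ⟨Fintype.card V, fun _ ⟨_, _, _, hn⟩ => hn ▸ card_le_univ _⟩ ⟨A, hA, hdisj, rfl⟩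

lemma card_le_alphaVal_of_chain_card_le (U : Finset V) {k : ℕ}
    (h : ∀ D : Finset V, IsChain (· ≤ ·) (D : Set V) → D ⊆ U → #D ≤ k) :
    #U ≤ alphaVal V k := by
  obtain ⟨P, hP, hdisj, rfl⟩ := exists_antichain_partition_of_chain_card_le U h
  exact le_alphaVal P hP hdisj

lemma mul_card_le_mul_alphaVal_of_chain_card_le (U : Finset V) {k ℓ : ℕ} (hkℓ : k ≤ ℓ)
    (h : ∀ D : Finset V, IsChain (· ≤ ·) (D : Set V) → D ⊆ U → #D ≤ ℓ) :
    k * #U ≤ ℓ * alphaVal V k := by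
  obtain ⟨P, hP, hdisj, rfl⟩ := exists_antichain_partition_of_chain_card_le U h
  obtain ⟨g, hg⟩ := Fin.exists_embedding_nsmul_sum_le hkℓ fun j => #(P j)
  have hdisj' : Pairwise (Disjoint on (P ∘ g)) := hdisj.comp_of_injective g.injective
  calc k * #(univ.biUnion P) = k * ∑ j, #(P j) := by
        rw [card_biUnion fun i _ j _ => @hdisj i j]
    _ ≤ ℓ * #(univ.biUnion (P ∘ g)) := by
      rw [card_biUnion fun i _ j _ => @hdisj' i j]
      simpa using hg
    _ ≤ ℓ * alphaVal V k := by gcongr; exact le_alphaVal _ (fun i => hP (g i)) hdisj'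

end Poset

section Uncovered

variable {V : Type} [Fintype V] [DecidableEq V] {m : ℕ} (C : Fin m → Finset V)

def uncovered (i : ℕ) : Finset V := {v | ∀ j : Fin m, (j : ℕ) < i → v ∉ C j}

variable {C}

@[simp]
lemma mem_uncovered {i : ℕ} {v : V} :
    v ∈ uncovered C i ↔ ∀ j : Fin m, (j : ℕ) < i → v ∉ C j := by
  simp [uncovered]

lemma uncovered_zero : uncovered C 0 = univ := by
  ext; simp

lemma uncovered_self : uncovered C m = univ \ univ.biUnion C := by
  ext; simp

lemma card_uncovered_succ (hdisj : Pairwise (Disjoint on C)) {i : ℕ} (hi : i < m) :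
    #(uncovered C i) = #(uncovered C (i + 1)) + #(C ⟨i, hi⟩) := by
  have hsplit : uncovered C i = uncovered C (i + 1) ∪ C ⟨i, hi⟩ := by
    ext v
    simp only [mem_union, mem_uncovered]
    constructor
    · intro hv
      by_cases hvi : v ∈ C ⟨i, hi⟩
      · exact .inr hvi
      · refine .inl fun j hj => ?_
        rcases Nat.lt_succ_iff_lt_or_eq.1 hj with hj | hj
        · exact hv j hj
        · exact (Fin.ext hj : j = ⟨i, hi⟩) ▸ hvi
    · rintro (hv | hv) j hj
      · exact hv j (by omega)
      · exact disjoint_left.1 (hdisj (Fin.ne_of_lt hj).symm) hv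
  rw [hsplit, card_union_of_disjoint]
  exact disjoint_left.2 fun v hv => mem_uncovered.1 hv ⟨i, hi⟩ (by simp)

lemma GreedyChainSeq.card_le_of_subset_uncovered [PartialOrder V] (hC : GreedyChainSeq V C)
    (i : Fin m) {D : Finset V} (hD : IsChain (· ≤ ·) (D : Set V)) (hDU : D ⊆ uncovered C i) :
    #D ≤ #(C i) :=
  hC.2.2 i D hD fun _ hv j hj => mem_uncovered.1 (hDU hv) j hj

end Uncovered

theorem greedy_chain_partition_harmonic_bound_general (V : Type) [Fintype V] [DecidableEq V]
    [PartialOrder V] (k : ℕ) (m : ℕ) (C : Fin m → Finset V)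
    (hgreedy : GreedyChainSeq V C)
    (hbig : ∀ i, k < (C i).card)
    (hstop : ∀ D : Finset V, IsChain (· ≤ ·) ((D : Finset V) : Set V) →
      (∀ v ∈ D, ∀ j, v ∉ C j) → D.card ≤ k) :
    (((Finset.univ \ Finset.univ.biUnion C).card + k * m : ℕ) : ℚ) ≤
      (∑ j ∈ Finset.range (Fintype.card V), (1 : ℚ) / ((j : ℚ) + 1)) *
        ((alphaVal V k : ℕ) : ℚ) := by
  have hstep : ∀ i < m, #(uncovered C (i + 1)) < #(uncovered C i) ∧
      k * #(uncovered C i) ≤ (#(uncovered C i) - #(uncovered C (i + 1))) * alphaVal V k := by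
    intro i hi
    have hcard := card_uncovered_succ hgreedy.2.1 hi
    refine ⟨by have := hbig ⟨i, hi⟩; omega, ?_⟩
    rw [show #(uncovered C i) - #(uncovered C (i + 1)) = #(C ⟨i, hi⟩) by omega]
    exact mul_card_le_mul_alphaVal_of_chain_card_le _ (hbig _).le fun D hD hDU =>
      hgreedy.card_le_of_subset_uncovered ⟨i, hi⟩ hD hDU
  have hrest : #(uncovered C m) ≤ alphaVal V k :=
    card_le_alphaVal_of_chain_card_le _ fun D hD hDU =>
      hstop D hD fun v hv j => mem_uncovered.1 (hDU hv) j j.isLt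
  have hgreedy_cost := natCast_mul_le_mul_harmonic_telescope (fun i => #(uncovered C i)) hstep
  have hrest_cost := natCast_le_mul_harmonic hrest
  rw [uncovered_zero, card_univ] at hgreedy_cost
  have hH : ∑ j ∈ range (Fintype.card V), (1 : ℚ) / ((j : ℚ) + 1) =
      harmonic (Fintype.card V) := by
    simp [harmonic, one_div]
  rw [hH, ← uncovered_self]
  push_cast
  linarith

/-- **Harmonic bound for greedy chains.** Let `C 0, …, C (m-1)` be a greedy chain
sequence with `|C i| > k` for all `i`, such that every chain in the set of still
uncovered elements has cardinality at most `k`. Then the `k`-norm of the chain partition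
formed by the `C i` together with singletons for the remaining elements, that is
`|V \ ⋃ C| + k·m`, is at most `H_{|V|} · α_k`. -/
theorem greedy_chain_partition_harmonic_bound (V : Type) [Fintype V] [DecidableEq V]
    [PartialOrder V] (k : ℕ) (hk : 0 < k) (m : ℕ) (C : Fin m → Finset V)
    (hgreedy : GreedyChainSeq V C)
    (hbig : ∀ i, k < (C i).card)
    (hstop : ∀ D : Finset V, IsChain (· ≤ ·) ((D : Finset V) : Set V) →
      (∀ v ∈ D, ∀ j, v ∉ C j) → D.card ≤ k) :
    (((Finset.univ \ Finset.univ.biUnion C).card + k * m : ℕ) : ℚ) ≤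
      (∑ j ∈ Finset.range (Fintype.card V), (1 : ℚ) / ((j : ℚ) + 1)) *
        ((alphaVal V k : ℕ) : ℚ) :=
  greedy_chain_partition_harmonic_bound_general V k m C hgreedy hbig hstop
end

section
/- Let (V, ≤) be a finite partially ordered set and k a positive integer. Every greedy chain sequence C_1, …, C_k of length k satisfies |C_1 ∪ … ∪ C_k| ≥ (1 − (1 − 1/k)^k) · β_k ≥ (1 − 1/e) · β_k; that is, the first k greedy chains cover at least a (1 − 1/e) fraction of the maximum number of elements coverable by k chains. -/
/-!
Let `U i` be the union of the first `i` greedy chains. Removing `U i` from the chains of an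
optimal family leaves chains that avoid all earlier greedy chains, so each has at most
`|C i|` elements; hence `β_k ≤ |U i| + k |C i|`, i.e. the uncovered part `β_k - |U i|` of the
optimum shrinks by a factor `1 - 1/k` at every step. After `k` steps it is at most
`(1 - 1/k)^k β_k ≤ β_k / e`.
-/

theorem sub_le_mul_one_sub_inv_pow_of_gain {k β : ℝ} (hk : 1 ≤ k) {u : ℕ → ℝ} (h0 : u 0 = 0)
    {n : ℕ} (hgain : ∀ i < n, β ≤ u i + k * (u (i + 1) - u i)) :
    β - u n ≤ β * (1 - 1 / k) ^ n := by
  induction n with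
  | zero => simp [h0]
  | succ n ih =>
    have hprev := ih fun i hi => hgain i (Nat.lt_succ_of_lt hi)
    have hfactor : 0 ≤ 1 - 1 / k := by
      rw [sub_nonneg, div_le_one (by linarith)]; exact hk
    have hstep : β - u (n + 1) ≤ (1 - 1 / k) * (β - u n) := by
      have hn := hgain n n.lt_succ_self
      have hinc : (β - u n) / k ≤ u (n + 1) - u n := by
        rw [div_le_iff₀ (by linarith)]; linarith
      calc β - u (n + 1) ≤ (β - u n) - (β - u n) / k := by linarith
        _ = (1 - 1 / k) * (β - u n) := by ring
    calc β - u (n + 1) ≤ (1 - 1 / k) * (β - u n) := hstep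
      _ ≤ (1 - 1 / k) * (β * (1 - 1 / k) ^ n) := mul_le_mul_of_nonneg_left hprev hfactor
      _ = β * (1 - 1 / k) ^ (n + 1) := by ring

theorem one_sub_inv_pow_le_inv_exp_one {k : ℕ} (hk : 0 < k) :
    (1 - 1 / (k : ℝ)) ^ k ≤ 1 / Real.exp 1 := by
  rw [one_div (Real.exp 1), ← Real.exp_neg]
  exact Real.one_sub_div_pow_le_exp_neg (by exact_mod_cast hk)

section PrefixUnion

variable {V : Type} [DecidableEq V] {m : ℕ}

def prefixUnion (C : Fin m → Finset V) (i : ℕ) : Finset V :=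
  (Finset.univ.filter fun j : Fin m => (j : ℕ) < i).biUnion C

@[simp]
theorem mem_prefixUnion {C : Fin m → Finset V} {i : ℕ} {v : V} :
    v ∈ prefixUnion C i ↔ ∃ j : Fin m, (j : ℕ) < i ∧ v ∈ C j := by
  simp [prefixUnion]

@[simp]
theorem prefixUnion_zero (C : Fin m → Finset V) : prefixUnion C 0 = ∅ := by
  ext v; simp

theorem prefixUnion_self (C : Fin m → Finset V) : prefixUnion C m = Finset.univ.biUnion C := by
  ext v; simp

theorem card_prefixUnion_succ {C : Fin m → Finset V}
    (hdisj : ∀ i j, i ≠ j → Disjoint (C i) (C j)) (i : Fin m) :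
    (prefixUnion C (i + 1)).card = (prefixUnion C i).card + (C i).card := by
  have hunion : prefixUnion C (i + 1) = prefixUnion C i ∪ C i := by
    ext v
    simp only [mem_prefixUnion, Finset.mem_union, Nat.lt_succ_iff_lt_or_eq, Fin.val_inj]
    constructor
    · rintro ⟨j, hj | rfl, hv⟩
      exacts [Or.inl ⟨j, hj, hv⟩, Or.inr hv]
    · rintro (⟨j, hj, hv⟩ | hv)
      exacts [⟨j, Or.inl hj, hv⟩, ⟨i, Or.inr rfl, hv⟩]
  have hdisj_prefix : Disjoint (prefixUnion C i) (C i) := by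
    rw [Finset.disjoint_left]
    intro v hv
    obtain ⟨j, hj, hvj⟩ := mem_prefixUnion.1 hv
    exact Finset.disjoint_left.1 (hdisj j i (Fin.ne_of_lt hj)) hvj
  rw [hunion, Finset.card_union_of_disjoint hdisj_prefix]

end PrefixUnion

theorem GreedyChainSeq.card_biUnion_le {V : Type} [DecidableEq V] [PartialOrder V] {m : ℕ}
    {C : Fin m → Finset V} (hC : GreedyChainSeq V C) (i : Fin m) {n : ℕ}
    {D : Fin n → Finset V} (hD : ∀ j, IsChain (· ≤ ·) ((D j : Finset V) : Set V)) :
    (Finset.univ.biUnion D).card ≤ (prefixUnion C i).card + n * (C i).card := by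
  obtain ⟨-, -, hmax⟩ := hC
  have hfresh : ∀ j, (D j \ prefixUnion C i).card ≤ (C i).card := fun j =>
    hmax i _ ((hD j).mono (by simp)) fun v hv l hl hvl =>
      (Finset.mem_sdiff.1 hv).2 (mem_prefixUnion.2 ⟨l, hl, hvl⟩)
  calc (Finset.univ.biUnion D).card
      ≤ (Finset.univ.biUnion D \ prefixUnion C i).card + (prefixUnion C i).card :=
        Finset.card_le_card_sdiff_add_card
    _ ≤ (Finset.univ.biUnion fun j => D j \ prefixUnion C i).card + (prefixUnion C i).card := by
        gcongr
        intro v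
        simp only [Finset.mem_sdiff, Finset.mem_biUnion, Finset.mem_univ, true_and]
        tauto
    _ ≤ (∑ j, (D j \ prefixUnion C i).card) + (prefixUnion C i).card := by
        gcongr; exact Finset.card_biUnion_le
    _ ≤ (∑ _j : Fin n, (C i).card) + (prefixUnion C i).card :=
        Nat.add_le_add_right (Finset.sum_le_sum fun j _ => hfresh j) _
    _ = (prefixUnion C i).card + n * (C i).card := by
        simp [add_comm]

theorem betaVal_le {V : Type} [Fintype V] [DecidableEq V] [PartialOrder V] {k a : ℕ}
    (h : ∀ D : Fin k → Finset V, (∀ j, IsChain (· ≤ ·) ((D j : Finset V) : Set V)) →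
      (Finset.univ.biUnion D).card ≤ a) :
    betaVal V k ≤ a := by
  refine csSup_le ⟨_, fun _ => ∅, by simp, by simp, rfl⟩ ?_
  rintro _ ⟨D, hD, -, rfl⟩
  exact h D hD

/-- **Greedy maximum-coverage guarantee for chains.** Every greedy chain sequence of
length `k` covers at least a `(1 - (1 - 1/k)^k) ≥ (1 - 1/e)` fraction of `β_k`. -/
theorem greedy_chains_coverage_guarantee (V : Type) [Fintype V] [DecidableEq V]
    [PartialOrder V] (k : ℕ) (hk : 0 < k) (C : Fin k → Finset V)
    (hgreedy : GreedyChainSeq V C) :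
    (1 - (1 - 1 / (k : ℝ)) ^ k) * (betaVal V k : ℝ) ≤
        ((Finset.univ.biUnion C).card : ℝ) ∧
    (1 - 1 / Real.exp 1) * (betaVal V k : ℝ) ≤
        (1 - (1 - 1 / (k : ℝ)) ^ k) * (betaVal V k : ℝ) := by
  have hgain : ∀ i < k, (betaVal V k : ℝ) ≤ (prefixUnion C i).card +
      k * ((prefixUnion C (i + 1)).card - (prefixUnion C i).card) := by
    intro i hi
    have hβ : (betaVal V k : ℝ) ≤ (prefixUnion C i).card + k * (C ⟨i, hi⟩).card := by
      exact_mod_cast betaVal_le fun D hD => hgreedy.card_biUnion_le ⟨i, hi⟩ hD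
    rw [card_prefixUnion_succ hgreedy.2.1 ⟨i, hi⟩]
    push_cast
    linarith
  have hgap := sub_le_mul_one_sub_inv_pow_of_gain (by exact_mod_cast hk)
    (by simp) hgain
  rw [prefixUnion_self] at hgap
  refine ⟨by linarith, ?_⟩
  gcongr
  linarith [one_sub_inv_pow_le_inv_exp_one hk]
end
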